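/- arXiv:math/0306051 — 2 statements merged into one kernel-verified Lean document; each statement's English description precedes it below -/
import Mathlib

section
/- Theorem 3.2: For all l ∈ ℕ and n ≥ 1, the Schur parameter can be recovered from the orthogonal polynomials by γ_{l,n+l} = −s_l^{1/2} · s_{l+1}^{-1/2} · φ_n(0,l) · (k^{l+1}_1 · k^{l+1}_2 ⋯ k^{l+1}_{n-1}) / (k^l_1 · k^l_2 ⋯ k^l_n), where the empty product (for n = 1) in the numerator equals 1. -/
open Polynomial Filter Finset

/-- The complementary quantity `d_{k,j} = (1 - |γ_{k,j}|²)^{1/2}`. -/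
noncomputable def dd (γ : ℕ → ℕ → ℂ) (k j : ℕ) : ℝ :=
  Real.sqrt (1 - ‖γ k j‖ ^ 2)

/-- The pair `(φ_n(·,l), φ♯_n(·,l))` of Szegő-type orthogonal polynomials attached to the
Schur parameters `γ` and the diagonal `s`, defined by the recurrences
`φ_n(X,l) = d_{l,n+l}⁻¹ (X φ_{n-1}(X,l+1) - γ_{l,n+l} φ♯_{n-1}(X,l))` and
`φ♯_n(X,l) = d_{l,n+l}⁻¹ (-conj(γ_{l,n+l}) X φ_{n-1}(X,l+1) + φ♯_{n-1}(X,l))`,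
with `φ_0(X,l) = φ♯_0(X,l) = s_l^{-1/2}`. -/
noncomputable def phiPair (s : ℕ → ℝ) (γ : ℕ → ℕ → ℂ) : ℕ → ℕ → Polynomial ℂ × Polynomial ℂ
  | 0, l => (Polynomial.C (((Real.sqrt (s l))⁻¹ : ℝ) : ℂ),
             Polynomial.C (((Real.sqrt (s l))⁻¹ : ℝ) : ℂ))
  | n + 1, l =>
      (Polynomial.C (((dd γ l (n + 1 + l))⁻¹ : ℝ) : ℂ) *
         (Polynomial.X * (phiPair s γ n (l + 1)).1 -
           Polynomial.C (γ l (n + 1 + l)) * (phiPair s γ n l).2),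
       Polynomial.C (((dd γ l (n + 1 + l))⁻¹ : ℝ) : ℂ) *
         (-(Polynomial.C ((starRingEnd ℂ) (γ l (n + 1 + l))) * Polynomial.X *
             (phiPair s γ n (l + 1)).1) +
           (phiPair s γ n l).2))

/-- The orthogonal polynomial `φ_n(X,l)`. -/
noncomputable def phi (s : ℕ → ℝ) (γ : ℕ → ℕ → ℂ) (n l : ℕ) : Polynomial ℂ :=
  (phiPair s γ n l).1

/-- The reversed polynomial `φ♯_n(X,l)`. -/
noncomputable def phiSharp (s : ℕ → ℝ) (γ : ℕ → ℕ → ℂ) (n l : ℕ) : Polynomial ℂ :=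
  (phiPair s γ n l).2

/-- The determinant `D_{r,q} = (∏_{k=r}^q s_k) ∏_{r ≤ k < j ≤ q} d_{k,j}²` of the positive
definite kernel associated with the parameters `γ`. -/
noncomputable def Ddet (s : ℕ → ℝ) (γ : ℕ → ℕ → ℂ) (r q : ℕ) : ℝ :=
  (∏ k ∈ Finset.Icc r q, s k) *
    ∏ k ∈ Finset.Icc r q, ∏ j ∈ Finset.Icc (k + 1) q, (dd γ k j) ^ 2

/-!
Evaluating the recurrences at `0` kills the `X`-terms, so `φ_n(0,l) = -γ_{l,n+l} φ♯_n(0,l)` and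
`φ♯_n(0,l) = s_l^{-1/2} ∏_{m=1}^n d_{l,m+l}⁻¹`. Comparing top coefficients gives
`k^l_m = d_{l,m+l}⁻¹ k^{l+1}_{m-1}` (the degree of `φ_m` is exactly `m` because `s > 0` and
`d > 0`), whence
`k^l_1 ⋯ k^l_n = s_{l+1}^{-1/2} (∏_{m=1}^n d_{l,m+l}⁻¹) k^{l+1}_1 ⋯ k^{l+1}_{n-1}`.
Substituting both into the right-hand side, everything but `γ_{l,n+l}` cancels.
-/

section PhiRecurrence

variable (s : ℕ → ℝ) (γ : ℕ → ℕ → ℂ)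

lemma phi_zero (l : ℕ) : phi s γ 0 l = C ((Real.sqrt (s l) : ℂ))⁻¹ := by
  simp [phi, phiPair]

lemma phiSharp_zero (l : ℕ) : phiSharp s γ 0 l = C ((Real.sqrt (s l) : ℂ))⁻¹ := by
  simp [phiSharp, phiPair]

lemma phi_succ (n l : ℕ) :
    phi s γ (n + 1) l = C ((dd γ l (n + 1 + l) : ℂ))⁻¹ *
      (X * phi s γ n (l + 1) - C (γ l (n + 1 + l)) * phiSharp s γ n l) := by
  simp [phi, phiSharp, phiPair]

lemma phiSharp_succ (n l : ℕ) :
    phiSharp s γ (n + 1) l = C ((dd γ l (n + 1 + l) : ℂ))⁻¹ *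
      (-(C (starRingEnd ℂ (γ l (n + 1 + l))) * X * phi s γ n (l + 1)) + phiSharp s γ n l) := by
  simp [phi, phiSharp, phiPair]

lemma natDegree_phi_le_and_phiSharp_le (n : ℕ) :
    ∀ l, (phi s γ n l).natDegree ≤ n ∧ (phiSharp s γ n l).natDegree ≤ n := by
  induction n with
  | zero => simp [phi_zero, phiSharp_zero]
  | succ n ih =>
    intro l
    have hX : (X * phi s γ n (l + 1)).natDegree ≤ n + 1 :=
      natDegree_mul_le.trans (add_comm 1 n ▸ add_le_add natDegree_X_le (ih (l + 1)).1)
    have hCX :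
        (C (starRingEnd ℂ (γ l (n + 1 + l))) * X * phi s γ n (l + 1)).natDegree ≤ n + 1 := by
      rw [mul_assoc]
      exact (natDegree_C_mul_le _ _).trans hX
    have hCsharp : (C (γ l (n + 1 + l)) * phiSharp s γ n l).natDegree ≤ n + 1 :=
      (natDegree_C_mul_le _ _).trans ((ih l).2.trans n.le_succ)
    rw [phi_succ, phiSharp_succ]
    exact ⟨(natDegree_C_mul_le _ _).trans ((natDegree_sub_le _ _).trans (max_le hX hCsharp)),
      (natDegree_C_mul_le _ _).trans ((natDegree_add_le _ _).trans
        (max_le ((natDegree_neg _).le.trans hCX) ((ih l).2.trans n.le_succ)))⟩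

lemma coeff_phi_succ_self (n l : ℕ) :
    (phi s γ (n + 1) l).coeff (n + 1) =
      (dd γ l (n + 1 + l) : ℂ)⁻¹ * (phi s γ n (l + 1)).coeff n := by
  have hsharp : (phiSharp s γ n l).coeff (n + 1) = 0 :=
    coeff_eq_zero_of_natDegree_lt (Nat.lt_succ_of_le (natDegree_phi_le_and_phiSharp_le s γ n l).2)
  rw [phi_succ, coeff_C_mul, coeff_sub, coeff_X_mul, coeff_C_mul, hsharp, mul_zero, sub_zero]

lemma eval_zero_phi_succ (n l : ℕ) :
    (phi s γ (n + 1) l).eval 0 = -γ l (n + 1 + l) * (phiSharp s γ (n + 1) l).eval 0 := by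
  simp only [phi_succ, phiSharp_succ, eval_mul, eval_sub, eval_add, eval_neg, eval_C, eval_X]
  ring

lemma eval_zero_phiSharp (n l : ℕ) :
    (phiSharp s γ n l).eval 0 =
      (Real.sqrt (s l) : ℂ)⁻¹ * ∏ m ∈ Icc 1 n, (dd γ l (m + l) : ℂ)⁻¹ := by
  induction n with
  | zero => simp [phiSharp_zero]
  | succ n ih =>
    rw [prod_Icc_succ_top (Nat.le_add_left 1 n), phiSharp_succ]
    simp only [eval_mul, eval_add, eval_neg, eval_C, eval_X, mul_zero, zero_mul, neg_zero,
      zero_add, ih]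
    ring

end PhiRecurrence

lemma dd_pos {γ : ℕ → ℕ → ℂ} {k j : ℕ} (hγ : ‖γ k j‖ < 1) : 0 < dd γ k j :=
  Real.sqrt_pos.mpr (by nlinarith [norm_nonneg (γ k j)])

section LeadingCoeff

variable {s : ℕ → ℝ} {γ : ℕ → ℕ → ℂ}
  (hs : ∀ l, 0 < s l) (hγ : ∀ k j, k < j → ‖γ k j‖ < 1)
include hs hγ

lemma coeff_phi_self_ne_zero (n : ℕ) : ∀ l, (phi s γ n l).coeff n ≠ 0 := by
  induction n with
  | zero =>
    intro l
    simpa [phi_zero] using (Real.sqrt_pos.mpr (hs l)).ne'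
  | succ n ih =>
    intro l
    rw [coeff_phi_succ_self]
    exact mul_ne_zero (inv_ne_zero (Complex.ofReal_ne_zero.mpr (dd_pos (hγ _ _ (by omega))).ne'))
      (ih (l + 1))

lemma leadingCoeff_phi (n l : ℕ) : (phi s γ n l).leadingCoeff = (phi s γ n l).coeff n := by
  rw [leadingCoeff, le_antisymm (natDegree_phi_le_and_phiSharp_le s γ n l).1
    (le_natDegree_of_ne_zero (coeff_phi_self_ne_zero hs hγ n l))]

lemma leadingCoeff_phi_ne_zero (n l : ℕ) : (phi s γ n l).leadingCoeff ≠ 0 :=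
  leadingCoeff_phi hs hγ n l ▸ coeff_phi_self_ne_zero hs hγ n l

lemma prod_leadingCoeff_phi (n l : ℕ) :
    ∏ m ∈ Icc 1 (n + 1), (phi s γ m l).leadingCoeff =
      (Real.sqrt (s (l + 1)) : ℂ)⁻¹ * (∏ m ∈ Icc 1 (n + 1), (dd γ l (m + l) : ℂ)⁻¹) *
        ∏ m ∈ Icc 1 n, (phi s γ m (l + 1)).leadingCoeff := by
  have hstep (m : ℕ) : (phi s γ (m + 1) l).leadingCoeff =
      (dd γ l (m + 1 + l) : ℂ)⁻¹ * (phi s γ m (l + 1)).leadingCoeff := by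
    rw [leadingCoeff_phi hs hγ, leadingCoeff_phi hs hγ, coeff_phi_succ_self]
  induction n with
  | zero => simp [hstep, phi_zero, mul_comm]
  | succ n ih =>
    rw [prod_Icc_succ_top (Nat.le_add_left 1 _), ih, hstep,
      prod_Icc_succ_top (Nat.le_add_left 1 (n + 1)) fun m => (dd γ l (m + l) : ℂ)⁻¹,
      prod_Icc_succ_top (Nat.le_add_left 1 n) fun m => (phi s γ m (l + 1)).leadingCoeff]
    ring

end LeadingCoeff

/-- Theorem 3.2: for all `l ∈ ℕ` and `n ≥ 1`, the Schur parameter can be recovered from the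
orthogonal polynomials by
`γ_{l,n+l} = -s_l^{1/2} s_{l+1}^{-1/2} φ_n(0,l) (k^{l+1}_1 ⋯ k^{l+1}_{n-1}) / (k^l_1 ⋯ k^l_n)`,
where `k^l_m` is the leading coefficient of `φ_m(X,l)` and the empty product (for `n = 1`)
in the numerator equals `1`. -/
theorem gamma_eq_of_phi_leadingCoeffs (s : ℕ → ℝ) (γ : ℕ → ℕ → ℂ)
    (hs : ∀ l, 0 < s l) (hγ : ∀ k j, k < j → ‖γ k j‖ < 1) (n l : ℕ) (hn : 1 ≤ n) :
    γ l (n + l) =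
      -((Real.sqrt (s l) : ℝ) : ℂ) * (((Real.sqrt (s (l + 1)))⁻¹ : ℝ) : ℂ) *
        (phi s γ n l).eval 0 *
        (∏ m ∈ Finset.Icc 1 (n - 1), (phi s γ m (l + 1)).leadingCoeff) /
        (∏ m ∈ Finset.Icc 1 n, (phi s γ m l).leadingCoeff) := by
  obtain ⟨n, rfl⟩ : ∃ m, n = m + 1 := ⟨n - 1, by omega⟩
  have hsqrt : (Real.sqrt (s l) : ℂ) ≠ 0 :=
    Complex.ofReal_ne_zero.mpr (Real.sqrt_pos.mpr (hs l)).ne'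
  have hprod : ∏ m ∈ Icc 1 (n + 1), (phi s γ m l).leadingCoeff ≠ 0 :=
    prod_ne_zero_iff.mpr fun m _ => leadingCoeff_phi_ne_zero hs hγ m l
  rw [eq_div_iff hprod, prod_leadingCoeff_phi hs hγ, Nat.add_sub_cancel, eval_zero_phi_succ,
    eval_zero_phiSharp]
  push_cast
  linear_combination (-γ l (n + 1 + l) * (Real.sqrt (s (l + 1)) : ℂ)⁻¹ *
    (∏ m ∈ Icc 1 (n + 1), (dd γ l (m + l) : ℂ)⁻¹) *
    ∏ m ∈ Icc 1 n, (phi s γ m (l + 1)).leadingCoeff) * mul_inv_cancel₀ hsqrt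
end

section
/- First half of Theorem 3.3 (Φ_n → 0): Assume the Szegő class condition: for every l ∈ ℕ, the partial products ∏_{p=1}^{m} d_{l,l+p} converge, as m → ∞, to a positive limit. Then for every k, l ∈ ℕ, φ_n^{(k)}(0,l) → 0 as n → ∞; equivalently, for every fixed k and l, the coefficient of X^k in φ_n(X,l) tends to 0 as n → ∞. -/
/-!
Write `a_n`, `b_n` for the coefficients of `X^k` in `φ_n(X,l)`, `φ♯_n(X,l)`, and `a'_n` for the
coefficient of `X^k` in `X φ_n(X,l+1)`; with `δ_n = d_{l,n+1+l}` and `c_n = |γ_{l,n+1+l}|` the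
recurrences give
`|a_{n+1}| ≤ δ_n⁻¹ (|a'_n| + c_n |b_n|)` and `|b_{n+1}| ≤ δ_n⁻¹ (c_n |a'_n| + |b_n|)`.
The Szegő condition makes `∏_{m<n} δ_m ≥ g > 0`, hence `δ_n ≥ g` and `∑ c_n² = ∑ (1 - δ_n²) < ∞`.
By induction on `k` (for all `l` at once) `a'` is square-summable; then `∏ δ · |b_n|` telescopes
to a bound by `|b_0| + ∑ c_m |a'_m|`, so `b` is bounded, and `a` is square-summable. Hence
`a_n → 0`, and `φ_n^{(k)}(0,l) = k! a_n`.
-/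

open Polynomial Filter Finset

open Topology

section ProductBounds

variable {δ : ℕ → ℝ} {g : ℝ}

lemma antitone_prod_range (h0 : ∀ n, 0 ≤ δ n) (h1 : ∀ n, δ n ≤ 1) :
    Antitone fun n => ∏ m ∈ range n, δ m :=
  antitone_nat_of_succ_le fun n => by
    rw [prod_range_succ]
    exact mul_le_of_le_one_right (prod_nonneg fun m _ => h0 m) (h1 n)

lemma le_prod_range_of_tendsto (h0 : ∀ n, 0 ≤ δ n) (h1 : ∀ n, δ n ≤ 1)
    (hδ : Tendsto (fun n => ∏ m ∈ range n, δ m) atTop (𝓝 g)) (n : ℕ) :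
    g ≤ ∏ m ∈ range n, δ m :=
  (antitone_prod_range h0 h1).le_of_tendsto hδ n

lemma le_of_tendsto_prod_range (h0 : ∀ n, 0 ≤ δ n) (h1 : ∀ n, δ n ≤ 1)
    (hδ : Tendsto (fun n => ∏ m ∈ range n, δ m) atTop (𝓝 g)) (n : ℕ) : g ≤ δ n :=
  calc g ≤ ∏ m ∈ range (n + 1), δ m := le_prod_range_of_tendsto h0 h1 hδ (n + 1)
    _ = (∏ m ∈ range n, δ m) * δ n := prod_range_succ _ _
    _ ≤ δ n := mul_le_of_le_one_left (h0 n) (prod_le_one (fun m _ => h0 m) fun m _ => h1 m)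

/-- `1 - δ² ≤ -log δ²`; the partial sums of `-log δ²` are `-2 log ∏ δ ≤ -2 log g`. -/
lemma summable_one_sub_sq_of_tendsto_prod_range (h0 : ∀ n, 0 ≤ δ n) (h1 : ∀ n, δ n ≤ 1)
    (hg : 0 < g) (hδ : Tendsto (fun n => ∏ m ∈ range n, δ m) atTop (𝓝 g)) :
    Summable fun n => 1 - δ n ^ 2 := by
  have hpos : ∀ n, 0 < δ n := fun n => hg.trans_le (le_of_tendsto_prod_range h0 h1 hδ n)
  refine summable_of_sum_range_le (c := -2 * Real.log g)
    (fun n => by nlinarith [h0 n, h1 n]) fun n => ?_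
  calc ∑ m ∈ range n, (1 - δ m ^ 2) ≤ ∑ m ∈ range n, -2 * Real.log (δ m) := by
        gcongr with m
        have := Real.log_le_sub_one_of_pos (pow_pos (hpos m) 2)
        rw [Real.log_pow] at this
        push_cast at this
        linarith
    _ = -2 * Real.log (∏ m ∈ range n, δ m) := by
        rw [Real.log_prod fun m _ => (hpos m).ne', mul_sum]
    _ ≤ -2 * Real.log g := by
        have := Real.log_le_log hg (le_prod_range_of_tendsto h0 h1 hδ n)
        linarith

end ProductBounds

section Recurrences

variable {δ u x : ℕ → ℝ}

lemma prod_range_mul_le_of_le_inv_mul (hδ0 : ∀ n, 0 < δ n) (hδ1 : ∀ n, δ n ≤ 1)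
    (hu : ∀ n, 0 ≤ u n) (hx : ∀ n, x (n + 1) ≤ (δ n)⁻¹ * (u n + x n)) (n : ℕ) :
    (∏ m ∈ range n, δ m) * x n ≤ x 0 + ∑ m ∈ range n, u m := by
  induction n with
  | zero => simp
  | succ n ih =>
    have hP0 : 0 ≤ ∏ m ∈ range n, δ m := prod_nonneg fun m _ => (hδ0 m).le
    have hP1 : ∏ m ∈ range n, δ m ≤ 1 :=
      prod_le_one (fun m _ => (hδ0 m).le) fun m _ => hδ1 m
    have hstep : δ n * x (n + 1) ≤ u n + x n := (le_inv_mul_iff₀ (hδ0 n)).1 (hx n)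
    calc (∏ m ∈ range (n + 1), δ m) * x (n + 1)
        = (∏ m ∈ range n, δ m) * (δ n * x (n + 1)) := by rw [prod_range_succ, mul_assoc]
      _ ≤ (∏ m ∈ range n, δ m) * (u n + x n) := mul_le_mul_of_nonneg_left hstep hP0
      _ ≤ u n + (∏ m ∈ range n, δ m) * x n := by
          rw [mul_add]
          gcongr
          exact mul_le_of_le_one_left (hu n) hP1
      _ ≤ x 0 + ∑ m ∈ range (n + 1), u m := by
          rw [sum_range_succ]
          linarith

lemma le_inv_mul_add_tsum_of_le_prod_range {g : ℝ} (hg : 0 < g)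
    (hgδ : ∀ n, g ≤ ∏ m ∈ range n, δ m) (hδ0 : ∀ n, 0 < δ n) (hδ1 : ∀ n, δ n ≤ 1)
    (hu0 : ∀ n, 0 ≤ u n) (hu : Summable u)
    (hx0 : ∀ n, 0 ≤ x n) (hx : ∀ n, x (n + 1) ≤ (δ n)⁻¹ * (u n + x n)) (n : ℕ) :
    x n ≤ g⁻¹ * (x 0 + ∑' m, u m) := by
  rw [le_inv_mul_iff₀ hg]
  calc g * x n ≤ (∏ m ∈ range n, δ m) * x n := mul_le_mul_of_nonneg_right (hgδ n) (hx0 n)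
    _ ≤ x 0 + ∑ m ∈ range n, u m := prod_range_mul_le_of_le_inv_mul hδ0 hδ1 hu0 hx n
    _ ≤ x 0 + ∑' m, u m := by gcongr; exact hu.sum_le_tsum _ fun m _ => hu0 m

end Recurrences

section SquareSummable

variable {v w : ℕ → ℝ}

lemma summable_mul_of_summable_sq (hv0 : ∀ n, 0 ≤ v n) (hw0 : ∀ n, 0 ≤ w n)
    (hv : Summable fun n => v n ^ 2) (hw : Summable fun n => w n ^ 2) :
    Summable fun n => v n * w n :=
  ((hv.add hw).div_const 2).of_nonneg_of_le (fun n => mul_nonneg (hv0 n) (hw0 n))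
    fun n => by nlinarith [sq_nonneg (v n - w n)]

lemma summable_sq_of_le_mul_add {a : ℕ → ℝ} {C : ℝ} (ha0 : ∀ n, 0 ≤ a n)
    (ha : ∀ n, a n ≤ C * (v n + w n))
    (hv : Summable fun n => v n ^ 2) (hw : Summable fun n => w n ^ 2) :
    Summable fun n => a n ^ 2 :=
  ((hv.add hw).mul_left (2 * C ^ 2)).of_nonneg_of_le (fun n => sq_nonneg _) fun n =>
    (pow_le_pow_left₀ (ha0 n) (ha n) 2).trans <| by
      nlinarith [mul_nonneg (sq_nonneg C) (sq_nonneg (v n - w n))]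

lemma tendsto_zero_of_summable_norm_sq {E : Type*} [SeminormedAddCommGroup E] {a : ℕ → E}
    (h : Summable fun n => ‖a n‖ ^ 2) : Tendsto a atTop (𝓝 0) := by
  rw [tendsto_zero_iff_norm_tendsto_zero]
  simpa using h.tendsto_atTop_zero.sqrt

end SquareSummable

lemma dd_nonneg (γ : ℕ → ℕ → ℂ) (k j : ℕ) : 0 ≤ dd γ k j :=
  Real.sqrt_nonneg _

lemma dd_le_one (γ : ℕ → ℕ → ℂ) (k j : ℕ) : dd γ k j ≤ 1 :=
  Real.sqrt_le_one.2 (by nlinarith [norm_nonneg (γ k j)])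

lemma sq_dd_of_pos {γ : ℕ → ℕ → ℂ} {k j : ℕ} (h : 0 < dd γ k j) :
    dd γ k j ^ 2 = 1 - ‖γ k j‖ ^ 2 :=
  Real.sq_sqrt (Real.sqrt_pos.1 h).le

section Coefficients

variable (s : ℕ → ℝ) (γ : ℕ → ℕ → ℂ)

lemma coeff_phi_succ (n l k : ℕ) : (phi s γ (n + 1) l).coeff k =
    ((dd γ l (n + 1 + l))⁻¹ : ℝ) *
      ((X * phi s γ n (l + 1)).coeff k - γ l (n + 1 + l) * (phiSharp s γ n l).coeff k) := by
  simp only [phi, phiSharp, phiPair, coeff_C_mul, coeff_sub]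

lemma coeff_phiSharp_succ (n l k : ℕ) : (phiSharp s γ (n + 1) l).coeff k =
    ((dd γ l (n + 1 + l))⁻¹ : ℝ) *
      (-(starRingEnd ℂ (γ l (n + 1 + l)) * (X * phi s γ n (l + 1)).coeff k) +
        (phiSharp s γ n l).coeff k) := by
  simp only [phi, phiSharp, phiPair, mul_assoc, coeff_C_mul, coeff_add, coeff_neg]

lemma norm_coeff_phi_succ_le (n l k : ℕ) : ‖(phi s γ (n + 1) l).coeff k‖ ≤
    (dd γ l (n + 1 + l))⁻¹ * (‖(X * phi s γ n (l + 1)).coeff k‖ +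
      ‖γ l (n + 1 + l)‖ * ‖(phiSharp s γ n l).coeff k‖) := by
  rw [coeff_phi_succ, norm_mul, Complex.norm_real,
    Real.norm_of_nonneg (inv_nonneg.2 (dd_nonneg γ _ _)), ← norm_mul]
  exact mul_le_mul_of_nonneg_left ((norm_sub_le _ _).trans_eq (by rw [norm_mul]))
    (inv_nonneg.2 (dd_nonneg γ _ _))

lemma norm_coeff_phiSharp_succ_le (n l k : ℕ) : ‖(phiSharp s γ (n + 1) l).coeff k‖ ≤
    (dd γ l (n + 1 + l))⁻¹ * (‖γ l (n + 1 + l)‖ * ‖(X * phi s γ n (l + 1)).coeff k‖ +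
      ‖(phiSharp s γ n l).coeff k‖) := by
  rw [coeff_phiSharp_succ, norm_mul, Complex.norm_real,
    Real.norm_of_nonneg (inv_nonneg.2 (dd_nonneg γ _ _))]
  exact mul_le_mul_of_nonneg_left ((norm_add_le _ _).trans_eq
    (by rw [norm_neg, norm_mul, Complex.norm_conj])) (inv_nonneg.2 (dd_nonneg γ _ _))

end Coefficients

lemma summable_sq_norm_coeff_phi_of_summable_coeff_X_mul {s : ℕ → ℝ} {γ : ℕ → ℕ → ℂ}
    {l k : ℕ} {g : ℝ} (hg : 0 < g)
    (hP : Tendsto (fun n => ∏ m ∈ range n, dd γ l (m + 1 + l)) atTop (𝓝 g))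
    (hX : Summable fun n => ‖(X * phi s γ n (l + 1)).coeff k‖ ^ 2) :
    Summable fun n => ‖(phi s γ n l).coeff k‖ ^ 2 := by
  have h0 : ∀ n, 0 ≤ dd γ l (n + 1 + l) := fun n => dd_nonneg γ l _
  have h1 : ∀ n, dd γ l (n + 1 + l) ≤ 1 := fun n => dd_le_one γ l _
  have hgδ : ∀ n, g ≤ dd γ l (n + 1 + l) := le_of_tendsto_prod_range h0 h1 hP
  have hδ0 : ∀ n, 0 < dd γ l (n + 1 + l) := fun n => hg.trans_le (hgδ n)
  have hγ : Summable fun n => ‖γ l (n + 1 + l)‖ ^ 2 := by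
    refine (summable_one_sub_sq_of_tendsto_prod_range h0 h1 hg hP).congr fun n => ?_
    rw [sq_dd_of_pos (hδ0 n)]
    ring
  obtain ⟨B, hB⟩ : ∃ B, ∀ n, ‖(phiSharp s γ n l).coeff k‖ ≤ B :=
    ⟨_, le_inv_mul_add_tsum_of_le_prod_range hg (le_prod_range_of_tendsto h0 h1 hP) hδ0 h1
      (fun n => by positivity)
      (summable_mul_of_summable_sq (fun n => norm_nonneg _) (fun n => norm_nonneg _) hγ hX)
      (fun n => norm_nonneg _) (norm_coeff_phiSharp_succ_le s γ · l k)⟩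
  refine (summable_nat_add_iff 1).1 <| summable_sq_of_le_mul_add (C := g⁻¹)
    (fun n => norm_nonneg _) (fun n => ?_) hX (w := fun n => ‖γ l (n + 1 + l)‖ * B)
    (by simpa only [mul_pow] using hγ.mul_right (B ^ 2))
  refine (norm_coeff_phi_succ_le s γ n l k).trans ?_
  gcongr
  exacts [hgδ n, hB n]

lemma summable_sq_norm_coeff_phi {s : ℕ → ℝ} {γ : ℕ → ℕ → ℂ}
    (hSzego : ∀ l, ∃ g : ℝ, 0 < g ∧
      Tendsto (fun m => ∏ p ∈ Icc 1 m, dd γ l (l + p)) atTop (𝓝 g)) (k l : ℕ) :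
    Summable fun n => ‖(phi s γ n l).coeff k‖ ^ 2 := by
  obtain ⟨g, hg, hP⟩ := hSzego l
  replace hP : Tendsto (fun n => ∏ m ∈ range n, dd γ l (m + 1 + l)) atTop (𝓝 g) :=
    hP.congr fun m => by
      rw [← Ico_add_one_right_eq_Icc, prod_Ico_eq_prod_range, add_tsub_cancel_right]
      simp only [add_comm]
  refine summable_sq_norm_coeff_phi_of_summable_coeff_X_mul hg hP ?_
  cases k with
  | zero => simp
  | succ k => simpa only [coeff_X_mul] using summable_sq_norm_coeff_phi hSzego k (l + 1)

theorem phi_derivative_tendsto_zero_general (s : ℕ → ℝ) (γ : ℕ → ℕ → ℂ)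
    (hSzego : ∀ l, ∃ g : ℝ, 0 < g ∧
      Filter.Tendsto (fun m => ∏ p ∈ Finset.Icc 1 m, dd γ l (l + p)) Filter.atTop (nhds g))
    (k l : ℕ) :
    Filter.Tendsto (fun n => (Polynomial.derivative^[k] (phi s γ n l)).eval 0)
      Filter.atTop (nhds 0) ∧
    Filter.Tendsto (fun n => (phi s γ n l).coeff k) Filter.atTop (nhds 0) := by
  have hcoeff := tendsto_zero_of_summable_norm_sq (summable_sq_norm_coeff_phi (s := s) hSzego k l)
  refine ⟨?_, hcoeff⟩
  simpa [← coeff_zero_eq_eval_zero, coeff_iterate_derivative, Nat.descFactorial_self]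
    using hcoeff.const_mul (k.factorial : ℂ)

/-- First half of Theorem 3.3 (`Φ_n → 0`): under the Szegő class condition (for every `l`,
the partial products `∏_{p=1}^m d_{l,l+p}` converge to a positive limit), for every
`k, l ∈ ℕ` one has `φ_n^{(k)}(0,l) → 0` as `n → ∞`; equivalently, the coefficient of `X^k`
in `φ_n(X,l)` tends to `0` as `n → ∞`. -/
theorem phi_derivative_tendsto_zero (s : ℕ → ℝ) (γ : ℕ → ℕ → ℂ)
    (hs : ∀ l, 0 < s l) (hγ : ∀ k j, k < j → ‖γ k j‖ < 1)
    (hSzego : ∀ l, ∃ g : ℝ, 0 < g ∧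
      Filter.Tendsto (fun m => ∏ p ∈ Finset.Icc 1 m, dd γ l (l + p)) Filter.atTop (nhds g))
    (k l : ℕ) :
    Filter.Tendsto (fun n => (Polynomial.derivative^[k] (phi s γ n l)).eval 0)
      Filter.atTop (nhds 0) ∧
    Filter.Tendsto (fun n => (phi s γ n l).coeff k) Filter.atTop (nhds 0) :=
  phi_derivative_tendsto_zero_general s γ hSzego k l
end
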